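/- PFO can express threshold counting quantifiers: for every PFO formula φ(y) with one free variable y and every integer k ≥ 1, there exists a PFO formula θ(x) with one free variable x such that for every string w over Σ of length N and every position n ∈ {1,…,N}, θ holds in w at x := n if and only if the number of positions m with 1 ≤ m < n at which φ holds is at least k. -/

import Mathlib

/-- The two variables of PFO. -/
inductive PVar : Type
  | x
  | y
deriving DecidableEq

/-- The other variable. -/
def PVar.other : PVar → PVar
  | .x => .y
  | .y => .x

/-- PFO formulas: atoms `π_a(v)`, Boolean connectives, bounded existential quantifiers
`∃ v < (other v) : φ` (binding `v`), and the unbounded quantifier `∃ v : φ`. -/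
inductive PFO (α : Type*) : Type _
  | atom : α → PVar → PFO α
  | conj : PFO α → PFO α → PFO α
  | neg : PFO α → PFO α
  | existsLt : PVar → PFO α → PFO α
  | existsUnb : PVar → PFO α → PFO α

/-- Free variables of a PFO formula; in `∃ v < (other v) : φ` the bounding
variable `other v` occurs free. -/
def PFO.freeVars {α : Type*} : PFO α → Finset PVar
  | .atom _ v => {v}
  | .conj φ₁ φ₂ => PFO.freeVars φ₁ ∪ PFO.freeVars φ₂
  | .neg φ => PFO.freeVars φ
  | .existsLt v φ => (PFO.freeVars φ).erase v ∪ {v.other}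
  | .existsUnb v φ => (PFO.freeVars φ).erase v

/-- Satisfaction of a PFO formula in string `w` under an assignment `ρ` of the
variables to (1-based) positions. -/
def PFO.Sat {α : Type*} (w : List α) : PFO α → (PVar → ℕ) → Prop
  | .atom a v, ρ => 1 ≤ ρ v ∧ w[ρ v - 1]? = some a
  | .conj φ₁ φ₂, ρ => PFO.Sat w φ₁ ρ ∧ PFO.Sat w φ₂ ρ
  | .neg φ, ρ => ¬ PFO.Sat w φ ρ
  | .existsLt v φ, ρ => ∃ m, 1 ≤ m ∧ m < ρ v.other ∧ PFO.Sat w φ (Function.update ρ v m)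
  | .existsUnb v φ, ρ => ∃ m, 1 ≤ m ∧ m ≤ w.length ∧ PFO.Sat w φ (Function.update ρ v m)

/-- A language is PFO-definable if it is the set of strings satisfying some PFO sentence. -/
def PFODefinable {α : Type*} (L : Set (List α)) : Prop :=
  ∃ φ : PFO α, PFO.freeVars φ = ∅ ∧ ∀ w : List α, w ∈ L ↔ ∀ ρ : PVar → ℕ, PFO.Sat w φ ρ

/-!
At least `j + 1` positions below `x` satisfy `φ` iff some `y < x` satisfies `φ` and has at least
`j` such positions below it (take `y` to be the largest one). Exchanging the names `x` and `y` in
the formula for `j` makes it speak about `y`, so this recursion never needs a third variable; the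
base case `j = 0` is the tautology `¬ ∃ y < x, φ(y) ∧ ¬ φ(y)`.
-/

lemma PVar.other_involutive : Function.Involutive PVar.other := by
  intro v; cases v <;> rfl

@[simp] lemma PVar.other_other (v : PVar) : v.other.other = v := PVar.other_involutive v

theorem Finset.succ_le_card_iff_exists_le_card_filter_lt {β : Type*} [LinearOrder β]
    (s : Finset β) (k : ℕ) : k + 1 ≤ s.card ↔ ∃ m ∈ s, k ≤ (s.filter (· < m)).card := by
  constructor
  · intro hk
    have hs : s.Nonempty := Finset.card_pos.mp (by omega)
    refine ⟨s.max' hs, s.max'_mem hs, ?_⟩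
    have herase : s.erase (s.max' hs) ⊆ s.filter (· < s.max' hs) := fun a ha =>
      Finset.mem_filter.mpr ⟨Finset.mem_of_mem_erase ha, s.lt_max'_of_mem_erase_max' hs ha⟩
    have := Finset.card_le_card herase
    rw [Finset.card_erase_of_mem (s.max'_mem hs)] at this
    omega
  · rintro ⟨m, hm, hk⟩
    have hlt : s.filter (· < m) ⊂ s :=
      (Finset.ssubset_iff_of_subset (Finset.filter_subset _ s)).mpr ⟨m, hm, by simp⟩
    have := Finset.card_lt_card hlt
    omega

namespace PFO

variable {α : Type*}

theorem sat_congr (w : List α) {φ : PFO α} {ρ₁ ρ₂ : PVar → ℕ}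
    (h : ∀ v ∈ φ.freeVars, ρ₁ v = ρ₂ v) : φ.Sat w ρ₁ ↔ φ.Sat w ρ₂ := by
  induction φ generalizing ρ₁ ρ₂ with
  | atom a v => simp [Sat, h v (by simp [freeVars])]
  | conj φ₁ φ₂ ih₁ ih₂ =>
    simp only [freeVars, Finset.mem_union] at h
    exact and_congr (ih₁ fun v hv => h v (.inl hv)) (ih₂ fun v hv => h v (.inr hv))
  | neg φ ih => exact not_congr (ih h)
  | existsLt v φ ih =>
    simp only [freeVars, Finset.mem_union, Finset.mem_erase, Finset.mem_singleton] at h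
    simp only [Sat, h v.other (.inr rfl)]
    refine exists_congr fun m => and_congr_right fun _ => and_congr_right fun _ =>
      ih fun u hu => ?_
    by_cases huv : u = v
    · simp [huv]
    · simp [Function.update_of_ne huv, h u (.inl ⟨huv, hu⟩)]
  | existsUnb v φ ih =>
    simp only [freeVars, Finset.mem_erase] at h
    refine exists_congr fun m => and_congr_right fun _ => and_congr_right fun _ =>
      ih fun u hu => ?_
    by_cases huv : u = v
    · simp [huv]
    · simp [Function.update_of_ne huv, h u ⟨huv, hu⟩]

theorem sat_iff_sat_const (w : List α) {φ : PFO α} {v : PVar} (hφ : φ.freeVars ⊆ {v})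
    (ρ : PVar → ℕ) : φ.Sat w ρ ↔ φ.Sat w (fun _ => ρ v) :=
  sat_congr w fun u hu => by rw [Finset.mem_singleton.mp (hφ hu)]

def swap : PFO α → PFO α
  | .atom a v => .atom a v.other
  | .conj φ₁ φ₂ => .conj φ₁.swap φ₂.swap
  | .neg φ => .neg φ.swap
  | .existsLt v φ => .existsLt v.other φ.swap
  | .existsUnb v φ => .existsUnb v.other φ.swap

theorem mem_freeVars_swap (φ : PFO α) (v : PVar) :
    v ∈ φ.swap.freeVars ↔ v.other ∈ φ.freeVars := by
  induction φ generalizing v with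
  | atom a u => simp [swap, freeVars, PVar.other_involutive.eq_iff]
  | conj φ₁ φ₂ ih₁ ih₂ => simp [swap, freeVars, ih₁, ih₂]
  | neg φ ih => simp [swap, freeVars, ih]
  | existsLt u φ ih => simp [swap, freeVars, ih, PVar.other_involutive.eq_iff]
  | existsUnb u φ ih => simp [swap, freeVars, ih, PVar.other_involutive.eq_iff]

theorem sat_swap (w : List α) (φ : PFO α) (ρ : PVar → ℕ) :
    φ.swap.Sat w ρ ↔ φ.Sat w (ρ ∘ PVar.other) := by
  induction φ generalizing ρ with
  | atom a v => simp [swap, Sat]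
  | conj φ₁ φ₂ ih₁ ih₂ => exact and_congr (ih₁ ρ) (ih₂ ρ)
  | neg φ ih => exact not_congr (ih ρ)
  | existsLt v φ ih =>
    simp only [swap, Sat, ih, PVar.other_other, Function.comp_apply,
      Function.update_comp_eq_of_injective _ PVar.other_involutive.injective]
  | existsUnb v φ ih =>
    simp only [swap, Sat, ih,
      Function.update_comp_eq_of_injective _ PVar.other_involutive.injective]

open Classical in
noncomputable def satBelow (w : List α) (φ : PFO α) (n : ℕ) : Finset ℕ :=
  (Finset.Ico 1 n).filter fun m => φ.Sat w (fun _ => m)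

theorem filter_satBelow_lt (w : List α) (φ : PFO α) {m n : ℕ} (hmn : m ≤ n) :
    (satBelow w φ n).filter (· < m) = satBelow w φ m := by
  ext t
  simp only [satBelow, Finset.mem_filter, Finset.mem_Ico]
  constructor
  · rintro ⟨⟨⟨ht, -⟩, hφ⟩, htm⟩
    exact ⟨⟨ht, htm⟩, hφ⟩
  · rintro ⟨⟨ht, htm⟩, hφ⟩
    exact ⟨⟨⟨ht, htm.trans_le hmn⟩, hφ⟩, htm⟩

def atLeast (φ : PFO α) : ℕ → PFO α
  | 0 => .neg (.existsLt .y (.conj φ (.neg φ)))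
  | j + 1 => .existsLt .y (.conj φ (atLeast φ j).swap)

theorem freeVars_existsLt_subset {ψ : PFO α} {v : PVar} (hψ : ψ.freeVars ⊆ {v}) :
    (existsLt v ψ).freeVars ⊆ {v.other} := by
  intro u hu
  simp only [freeVars, Finset.mem_union, Finset.mem_erase] at hu
  rcases hu with ⟨huv, hu⟩ | hu
  · exact absurd (Finset.mem_singleton.mp (hψ hu)) huv
  · exact hu

theorem freeVars_atLeast {φ : PFO α} (hφ : φ.freeVars ⊆ {PVar.y}) (j : ℕ) :
    (atLeast φ j).freeVars ⊆ {PVar.x} := by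
  induction j with
  | zero =>
    exact freeVars_existsLt_subset (v := .y) (by simpa [freeVars] using hφ)
  | succ j ih =>
    refine freeVars_existsLt_subset (v := .y) (Finset.union_subset hφ fun v hv => ?_)
    have := Finset.mem_singleton.mp (ih ((mem_freeVars_swap _ v).mp hv))
    cases v <;> simp_all [PVar.other]

theorem sat_atLeast (w : List α) {φ : PFO α} (hφ : φ.freeVars ⊆ {PVar.y}) (j : ℕ)
    (ρ : PVar → ℕ) : (atLeast φ j).Sat w ρ ↔ j ≤ (satBelow w φ (ρ .x)).card := by
  induction j generalizing ρ with
  | zero => simp [atLeast, Sat]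
  | succ j ih =>
    rw [Finset.succ_le_card_iff_exists_le_card_filter_lt]
    simp only [atLeast, Sat, sat_swap, ih, PVar.other, Function.comp_apply,
      Function.update_self, sat_iff_sat_const w hφ (Function.update _ _ _)]
    constructor
    · rintro ⟨m, hm, hmn, hφm, hj⟩
      refine ⟨m, ?_, ?_⟩
      · simpa [satBelow, hm, hmn] using hφm
      · rwa [filter_satBelow_lt w φ hmn.le]
    · rintro ⟨m, hmφ, hj⟩
      simp only [satBelow, Finset.mem_filter, Finset.mem_Ico] at hmφ
      obtain ⟨⟨hm, hmn⟩, hφm⟩ := hmφ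
      exact ⟨m, hm, hmn, hφm, by rwa [← filter_satBelow_lt w φ hmn.le]⟩

end PFO

theorem pfo_threshold_counting_general {α : Type*} (φ : PFO α)
    (hφ : PFO.freeVars φ ⊆ {PVar.y}) (k : ℕ) :
    ∃ θ : PFO α, PFO.freeVars θ ⊆ {PVar.x} ∧
      ∀ (w : List α) (n : ℕ) (ρ : PVar → ℕ), 1 ≤ n → n ≤ w.length → ρ PVar.x = n →
        (PFO.Sat w θ ρ ↔
          k ≤ {m : ℕ | 1 ≤ m ∧ m < n ∧ PFO.Sat w φ (Function.update ρ PVar.y m)}.ncard) := by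
  refine ⟨PFO.atLeast φ k, PFO.freeVars_atLeast hφ k, fun w n ρ _ _ hx => ?_⟩
  have hset : {m : ℕ | 1 ≤ m ∧ m < n ∧ PFO.Sat w φ (Function.update ρ PVar.y m)} =
      PFO.satBelow w φ n := by
    ext m
    simp [PFO.satBelow, PFO.sat_iff_sat_const w hφ (Function.update ρ _ _), and_assoc]
  rw [PFO.sat_atLeast w hφ, hx, hset, Set.ncard_coe_finset]

/-- PFO expresses threshold counting: for every PFO formula `φ(y)` with one
free variable `y` and every `k ≥ 1`, there is a PFO formula `θ(x)` with one free variable `x`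
that holds at `x := n` iff the number of positions `m` with `1 ≤ m < n` satisfying `φ` at
`y := m` is at least `k`. -/
theorem pfo_threshold_counting {α : Type*} [Fintype α] (φ : PFO α)
    (hφ : PFO.freeVars φ ⊆ {PVar.y}) (k : ℕ) (hk : 1 ≤ k) :
    ∃ θ : PFO α, PFO.freeVars θ ⊆ {PVar.x} ∧
      ∀ (w : List α) (n : ℕ) (ρ : PVar → ℕ), 1 ≤ n → n ≤ w.length → ρ PVar.x = n →
        (PFO.Sat w θ ρ ↔
          k ≤ {m : ℕ | 1 ≤ m ∧ m < n ∧ PFO.Sat w φ (Function.update ρ PVar.y m)}.ncard) :=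
  pfo_threshold_counting_general φ hφ k
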